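/- Let Ω̃ be an open subset of the upper half plane {x + iy ∈ ℂ : y > 0}, let ũ, ṽ : Ω̃ → ℝ be C¹, and define the CI quaternionic function f(p) = ũ(t, r(p)) + ι(p)·ṽ(t, r(p)) on ω = {p ∈ ℍ : r(p) > 0, (t, r(p)) ∈ Ω̃}. Then the complex component f̃(x+iy) = ũ(x,y) + i·ṽ(x,y) is holomorphic on Ω̃ (i.e. ∂f̃/∂x + i·∂f̃/∂y = 0 on Ω̃) if and only if ∂f/∂_l p̄ = −2ṽ(t, r(p))/r(p) at every p ∈ ω. -/

import Mathlib

/-!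
Write `f = ũ ∘ c + (ṽ ∘ c) · ι` with `c q = (Re q, |Im q|)`. The directional derivative of `c`
along a unit `eₐ ∈ {i, j, k}` is `ιₐ(p) · i ∈ ℂ`, so in `∂f/∂_l p̄ = Σ eₐ ∂ₐf` the derivatives of
`ũ`, `ṽ` recombine, using `ι² = -1`, into `(ũ_x - ṽ_y) + (ṽ_x + ũ_y) ι(p)`, while `ι` itself
contributes `ṽ · Σ eₐ ∂ₐι = -2ṽ/r`. Since `1` and `ι(p)` are linearly independent over `ℝ`,
the Fueter equation at `p` is exactly the Cauchy–Riemann system at `c p`, and every point of `Ω̃`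
is some `c p` because `Ω̃` lies in the upper half plane.
-/

open Quaternion

noncomputable section

/-- The quaternionic imaginary units. -/
def qI : ℍ[ℝ] := ⟨0, 1, 0, 0⟩
def qJ : ℍ[ℝ] := ⟨0, 0, 1, 0⟩
def qK : ℍ[ℝ] := ⟨0, 0, 0, 1⟩

/-- `ι(p) = Im p / |Im p|`. -/
def iota (p : ℍ[ℝ]) : ℍ[ℝ] := (‖p.im‖)⁻¹ • p.im

/-- The left Fueter operator `∂f/∂_l p̄`. -/
def fueterL (f : ℍ[ℝ] → ℍ[ℝ]) (p : ℍ[ℝ]) : ℍ[ℝ] :=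
  fderiv ℝ f p 1 + qI * fderiv ℝ f p qI + qJ * fderiv ℝ f p qJ + qK * fderiv ℝ f p qK

/-- The right Fueter operator `∂f/∂_r p̄`. -/
def fueterR (f : ℍ[ℝ] → ℍ[ℝ]) (p : ℍ[ℝ]) : ℍ[ℝ] :=
  fderiv ℝ f p 1 + fderiv ℝ f p qI * qI + fderiv ℝ f p qJ * qJ + fderiv ℝ f p qK * qK

/-- Spherical parametrization of the imaginary unit sphere. -/
def sph (α β : ℝ) : ℍ[ℝ] :=
  ⟨0, Real.cos α * Real.sin β, Real.sin α * Real.sin β, Real.cos β⟩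

/-- `∂ι/∂α`. -/
def sphA (α β : ℝ) : ℍ[ℝ] :=
  ⟨0, -(Real.sin α * Real.sin β), Real.cos α * Real.sin β, 0⟩

/-- `∂ι/∂β`. -/
def sphB (α β : ℝ) : ℍ[ℝ] :=
  ⟨0, Real.cos α * Real.cos β, Real.sin α * Real.cos β, -Real.sin β⟩

/-- Complex Extrinsic on ω. -/
def IsCE (f : ℍ[ℝ] → ℍ[ℝ]) (ω : Set ℍ[ℝ]) : Prop := ∀ p ∈ ω, f p * p = p * f p

/-- Class I : C¹, CE and `∂f/∂t + ι ∂f/∂r = 0`. -/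
def IsClassI (f : ℍ[ℝ] → ℍ[ℝ]) (ω : Set ℍ[ℝ]) : Prop :=
  ContDiffOn ℝ 1 f ω ∧ IsCE f ω ∧
  ∀ p ∈ ω, fderiv ℝ f p 1 + iota p * fderiv ℝ f p (iota p) = 0

/-- Class II with an explicit decomposition `f = u + ι v`. -/
def IsClassIIWith (f : ℍ[ℝ] → ℍ[ℝ]) (u v : ℍ[ℝ] → ℝ) (ω : Set ℍ[ℝ]) : Prop :=
  ContDiffOn ℝ 1 f ω ∧
  (∀ p ∈ ω, f p = (u p : ℍ[ℝ]) + (v p : ℍ[ℝ]) * iota p) ∧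
  ∀ p ∈ ω, fueterL f p = ((-2 * v p / ‖p.im‖ : ℝ) : ℍ[ℝ])

/-- (left-) Class II. -/
def IsClassII (f : ℍ[ℝ] → ℍ[ℝ]) (ω : Set ℍ[ℝ]) : Prop := ∃ u v, IsClassIIWith f u v ω

/-- right-Class II with an explicit decomposition. -/
def IsClassIIRWith (f : ℍ[ℝ] → ℍ[ℝ]) (u v : ℍ[ℝ] → ℝ) (ω : Set ℍ[ℝ]) : Prop :=
  ContDiffOn ℝ 1 f ω ∧
  (∀ p ∈ ω, f p = (u p : ℍ[ℝ]) + (v p : ℍ[ℝ]) * iota p) ∧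
  ∀ p ∈ ω, fueterR f p = ((-2 * v p / ‖p.im‖ : ℝ) : ℍ[ℝ])

/-- right-Class II. -/
def IsClassIIR (f : ℍ[ℝ] → ℍ[ℝ]) (ω : Set ℍ[ℝ]) : Prop := ∃ u v, IsClassIIRWith f u v ω

/-- Complex Intrinsic : `u`, `v` depend only on `(t, r)`. -/
def IsCI (f : ℍ[ℝ] → ℍ[ℝ]) (ω : Set ℍ[ℝ]) : Prop :=
  ∃ ut vt : ℝ → ℝ → ℝ, ∀ p ∈ ω,
    f p = (ut p.re ‖p.im‖ : ℍ[ℝ]) + (vt p.re ‖p.im‖ : ℍ[ℝ]) * iota p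

/-- Class III : Class I and CI. -/
def IsClassIII (f : ℍ[ℝ] → ℍ[ℝ]) (ω : Set ℍ[ℝ]) : Prop := IsClassI f ω ∧ IsCI f ω

section InnerProductSpace

variable {E : Type*} [NormedAddCommGroup E] [InnerProductSpace ℝ E] {x : E}

theorem hasFDerivAt_norm_of_ne_zero (hx : x ≠ 0) :
    HasFDerivAt (fun y : E => ‖y‖) (innerSL ℝ (‖x‖⁻¹ • x)) x := by
  have hx' : 0 < ‖x‖ := norm_pos_iff.mpr hx
  have h := (Real.hasDerivAt_sqrt (pow_pos hx' 2).ne').comp_hasFDerivAt x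
    (hasFDerivAt_id x).norm_sq
  simp only [Function.comp_def, id, Real.sqrt_sq (norm_nonneg _)] at h
  refine h.congr_fderiv ?_
  ext w
  simp only [one_div, mul_inv_rev, ContinuousLinearMap.comp_id, smul_apply, coe_innerSL_apply,
    nsmul_eq_mul, Nat.cast_ofNat, smul_eq_mul, map_smul]
  field_simp

theorem hasFDerivAt_inv_norm_smul_self (hx : x ≠ 0) :
    HasFDerivAt (fun y : E => ‖y‖⁻¹ • y)
      (‖x‖⁻¹ • (ContinuousLinearMap.id ℝ E
        - (innerSL ℝ (‖x‖⁻¹ • x)).smulRight (‖x‖⁻¹ • x))) x := by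
  have hx' : 0 < ‖x‖ := norm_pos_iff.mpr hx
  have h := ((hasDerivAt_inv hx'.ne').comp_hasFDerivAt x
    (hasFDerivAt_norm_of_ne_zero hx)).smul (hasFDerivAt_id x)
  refine h.congr_fderiv ?_
  ext w
  simp only [Function.comp_apply, map_smul, neg_smul, id_eq, add_apply, smul_apply,
    ContinuousLinearMap.id_apply, ContinuousLinearMap.smulRight_apply, neg_apply,
    coe_innerSL_apply, smul_eq_mul, sub_apply]
  module

end InnerProductSpace

theorem HasFDerivAt.coe_quaternion {E : Type*} [NormedAddCommGroup E] [NormedSpace ℝ E]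
    {f : E → ℝ} {f' : E →L[ℝ] ℝ} {x : E} (hf : HasFDerivAt f f' x) :
    HasFDerivAt (fun y => (f y : ℍ[ℝ])) (f'.smulRight 1) x := by
  have h := hf.smul_const (1 : ℍ[ℝ])
  simp only [← Algebra.algebraMap_eq_smul_one, Quaternion.algebraMap_def] at h
  exact h

namespace Quaternion

def reCLM : ℍ[ℝ] →L[ℝ] ℝ := (QuaternionAlgebra.reₗ (-1) 0 (-1)).toContinuousLinearMap

def imCLM : ℍ[ℝ] →L[ℝ] ℍ[ℝ] := LinearMap.toContinuousLinearMap
  { toFun := im, map_add' := im_add, map_smul' := fun c q => im_smul q c }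

@[simp] lemma reCLM_apply (q : ℍ[ℝ]) : reCLM q = q.re := rfl

@[simp] lemma imCLM_apply (q : ℍ[ℝ]) : imCLM q = q.im := rfl

lemma mul_self_eq_neg_one {n : ℍ[ℝ]} (hn : n.re = 0) (hn1 : ‖n‖ = 1) : n * n = -1 := by
  rw [← sq, sq_eq_neg_normSq.mpr hn, normSq_eq_norm_mul_self, hn1]
  simp

end Quaternion

-- `qI`, `qJ`, `qK` are structure literals, which the `Quaternion` simp lemmas do not see through.
@[simp] lemma re_qI : qI.re = 0 := rfl

@[simp] lemma imI_qI : qI.imI = 1 := rfl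

@[simp] lemma imJ_qI : qI.imJ = 0 := rfl

@[simp] lemma imK_qI : qI.imK = 0 := rfl

@[simp] lemma re_qJ : qJ.re = 0 := rfl

@[simp] lemma imI_qJ : qJ.imI = 0 := rfl

@[simp] lemma imJ_qJ : qJ.imJ = 1 := rfl

@[simp] lemma imK_qJ : qJ.imK = 0 := rfl

@[simp] lemma re_qK : qK.re = 0 := rfl

@[simp] lemma imI_qK : qK.imI = 0 := rfl

@[simp] lemma imJ_qK : qK.imJ = 0 := rfl

@[simp] lemma imK_qK : qK.imK = 1 := rfl

@[simp] lemma im_qI : qI.im = qI := by ext <;> rfl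

@[simp] lemma im_qJ : qJ.im = qJ := by ext <;> rfl

@[simp] lemma im_qK : qK.im = qK := by ext <;> rfl

@[simp] lemma inner_qI (n : ℍ[ℝ]) : inner ℝ n qI = n.imI := by
  simp [Quaternion.inner_def, Quaternion.re_mul]

@[simp] lemma inner_qJ (n : ℍ[ℝ]) : inner ℝ n qJ = n.imJ := by
  simp [Quaternion.inner_def, Quaternion.re_mul]

@[simp] lemma inner_qK (n : ℍ[ℝ]) : inner ℝ n qK = n.imK := by
  simp [Quaternion.inner_def, Quaternion.re_mul]

def reNormIm (q : ℍ[ℝ]) : ℂ := ⟨q.re, ‖q.im‖⟩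

section Iota

variable {p : ℍ[ℝ]}

lemma re_iota (p : ℍ[ℝ]) : (iota p).re = 0 := by simp [iota]

lemma norm_iota (hp : p.im ≠ 0) : ‖iota p‖ = 1 := by
  simp [iota, norm_smul, hp]

lemma iota_ne_zero (hp : p.im ≠ 0) : iota p ≠ 0 := by
  intro h
  simpa [h] using norm_iota hp

lemma hasFDerivAt_norm_im (hp : p.im ≠ 0) :
    HasFDerivAt (fun q : ℍ[ℝ] => ‖q.im‖) ((innerSL ℝ (iota p)).comp Quaternion.imCLM) p :=
  (hasFDerivAt_norm_of_ne_zero hp).comp p Quaternion.imCLM.hasFDerivAt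

lemma hasFDerivAt_iota (hp : p.im ≠ 0) :
    HasFDerivAt iota ((‖p.im‖⁻¹ • (ContinuousLinearMap.id ℝ ℍ[ℝ]
        - (innerSL ℝ (iota p)).smulRight (iota p))).comp Quaternion.imCLM) p :=
  (hasFDerivAt_inv_norm_smul_self hp).comp p Quaternion.imCLM.hasFDerivAt

lemma hasFDerivAt_reNormIm (hp : p.im ≠ 0) :
    HasFDerivAt reNormIm (Complex.equivRealProdCLM.symm.toContinuousLinearMap.comp
      (Quaternion.reCLM.prod ((innerSL ℝ (iota p)).comp Quaternion.imCLM))) p :=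
  Complex.equivRealProdCLM.symm.hasFDerivAt.comp p
    (Quaternion.reCLM.hasFDerivAt.prodMk (hasFDerivAt_norm_im hp))

lemma coe_add_coe_mul_iota_eq_zero_iff (hp : p.im ≠ 0) (x y : ℝ) :
    (x : ℍ[ℝ]) + (y : ℍ[ℝ]) * iota p = 0 ↔ x = 0 ∧ y = 0 := by
  refine ⟨fun h => ?_, fun ⟨hx, hy⟩ => by simp [hx, hy]⟩
  have hx : x = 0 := by simpa [Quaternion.re_mul, re_iota] using congrArg (·.re) h
  simp only [hx, Quaternion.coe_zero, zero_add, mul_eq_zero, iota_ne_zero hp, or_false] at h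
  exact ⟨hx, by simpa using congrArg (·.re) h⟩

end Iota

lemma exists_reNormIm_eq {z : ℂ} (hz : 0 < z.im) :
    ∃ p : ℍ[ℝ], p.im ≠ 0 ∧ reNormIm p = z := by
  have hnorm : ‖(z : ℍ[ℝ]).im‖ = z.im := by
    have h : ‖(z : ℍ[ℝ]).im‖ * ‖(z : ℍ[ℝ]).im‖ = z.im * z.im := by
      rw [← Quaternion.normSq_eq_norm_mul_self, Quaternion.normSq_def']
      simp [sq]
    exact (mul_self_inj (norm_nonneg _) hz.le).1 h
  refine ⟨z, fun h => ?_, ?_⟩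
  · rw [h, norm_zero] at hnorm
    exact hz.ne hnorm
  · apply Complex.ext <;> simp [reNormIm, hnorm]

def fueterSum (L : ℍ[ℝ] → ℍ[ℝ]) : ℍ[ℝ] := L 1 + qI * L qI + qJ * L qJ + qK * L qK

section FueterSum

variable (L M : ℍ[ℝ] → ℍ[ℝ])

lemma fueterL_eq_fueterSum (f : ℍ[ℝ] → ℍ[ℝ]) (p : ℍ[ℝ]) :
    fueterL f p = fueterSum (fderiv ℝ f p) := rfl

lemma fueterSum_add : fueterSum (fun w => L w + M w) = fueterSum L + fueterSum M := by
  simp only [fueterSum, mul_add]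
  abel

lemma fueterSum_sub : fueterSum (fun w => L w - M w) = fueterSum L - fueterSum M := by
  simp only [fueterSum, mul_sub]
  abel

lemma fueterSum_mul_const (c : ℍ[ℝ]) : fueterSum (fun w => L w * c) = fueterSum L * c := by
  simp only [fueterSum, add_mul, mul_assoc]

lemma fueterSum_smul (r : ℝ) : fueterSum (fun w => r • L w) = r • fueterSum L := by
  simp only [fueterSum, mul_smul_comm, smul_add]

lemma fueterSum_ofReal (φ : ℍ[ℝ] → ℝ) :
    fueterSum (fun w => (φ w : ℍ[ℝ])) = ⟨φ 1, φ qI, φ qJ, φ qK⟩ := by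
  ext <;> simp [fueterSum, Quaternion.re_mul, Quaternion.imI_mul, Quaternion.imJ_mul,
    Quaternion.imK_mul]

lemma fueterSum_im : fueterSum (fun w => w.im) = ((-3 : ℝ) : ℍ[ℝ]) := by
  ext <;> norm_num [fueterSum, Quaternion.re_mul, Quaternion.imI_mul, Quaternion.imJ_mul,
    Quaternion.imK_mul]

variable {n : ℍ[ℝ]}

lemma fueterSum_coe_inner_im (hn : n.re = 0) :
    fueterSum (fun w => ((inner ℝ n w.im : ℝ) : ℍ[ℝ])) = n := by
  rw [fueterSum_ofReal]
  ext <;> simp [hn]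

lemma fueterSum_ofReal_comp_mk (hn : n.re = 0) (a : ℂ →L[ℝ] ℝ) :
    fueterSum (fun w => (a ⟨w.re, inner ℝ n w.im⟩ : ℍ[ℝ]))
      = (a 1 : ℍ[ℝ]) + (a Complex.I : ℍ[ℝ]) * n := by
  have ha : ∀ x y : ℝ, a ⟨x, y⟩ = x * a 1 + y * a Complex.I := fun x y => by
    rw [show (⟨x, y⟩ : ℂ) = x • 1 + y • Complex.I by apply Complex.ext <;> simp,
      map_add, map_smul, map_smul, smul_eq_mul, smul_eq_mul]
  rw [fueterSum_ofReal]
  -- otherwise `simp [ha]` loops on `a 1`, since `1 = ⟨1, 0⟩`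
  generalize a 1 = α at ha
  generalize a Complex.I = β at ha
  ext <;> simp [ha, hn, mul_comm, Quaternion.re_mul, Quaternion.imI_mul, Quaternion.imJ_mul,
    Quaternion.imK_mul]

/-- The `-2` is `Σ eₐ eₐ = -3` corrected by `n * n = -1`. -/
lemma fueterSum_projection (hn : n.re = 0) (hn1 : ‖n‖ = 1) :
    fueterSum (fun w => w.im - inner ℝ n w.im • n) = ((-2 : ℝ) : ℍ[ℝ]) := by
  simp_rw [fueterSum_sub, fueterSum_im, ← Quaternion.coe_mul_eq_smul, fueterSum_mul_const,
    fueterSum_coe_inner_im hn, Quaternion.mul_self_eq_neg_one hn hn1]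
  rw [← Quaternion.coe_one, ← Quaternion.coe_neg, ← Quaternion.coe_sub]
  norm_num

end FueterSum

def ciFunction (ut vt : ℂ → ℝ) (q : ℍ[ℝ]) : ℍ[ℝ] :=
  (ut (reNormIm q) : ℍ[ℝ]) + (vt (reNormIm q) : ℍ[ℝ]) * iota q

section CIFunction

variable {p : ℍ[ℝ]} {ut vt : ℂ → ℝ} {a b : ℂ →L[ℝ] ℝ}

lemma fderiv_ciFunction_apply (hp : p.im ≠ 0) (hu : HasFDerivAt ut a (reNormIm p))
    (hv : HasFDerivAt vt b (reNormIm p)) (w : ℍ[ℝ]) :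
    fderiv ℝ (ciFunction ut vt) p w =
      (a ⟨w.re, inner ℝ (iota p) w.im⟩ : ℍ[ℝ])
        + (b ⟨w.re, inner ℝ (iota p) w.im⟩ : ℍ[ℝ]) * iota p
        + (vt (reNormIm p) / ‖p.im‖) • (w.im - inner ℝ (iota p) w.im • iota p) := by
  have hc := hasFDerivAt_reNormIm hp
  have h : HasFDerivAt (ciFunction ut vt) _ p := (hu.comp p hc).coe_quaternion.add
    ((hv.comp p hc).coe_quaternion.mul' (hasFDerivAt_iota hp))
  have e (x y : ℝ) : Complex.equivRealProdCLM.symm (x, y) = ⟨x, y⟩ := rfl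
  rw [h.fderiv]
  simp only [Function.comp_apply, ContinuousLinearMap.smul_comp, ContinuousLinearMap.sub_comp,
    ContinuousLinearMap.id_comp, add_apply, ContinuousLinearMap.smulRight_apply,
    ContinuousLinearMap.comp_apply, ContinuousLinearMap.prod_apply, Quaternion.reCLM_apply,
    Quaternion.imCLM_apply, coe_innerSL_apply, ContinuousLinearEquiv.coe_coe, smul_apply,
    sub_apply, smul_eq_mul, Algebra.mul_smul_comm, MulOpposite.smul_eq_mul_unop,
    MulOpposite.unop_op, e, ← Algebra.algebraMap_eq_smul_one, Quaternion.algebraMap_def,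
    Quaternion.coe_mul_eq_smul, smul_smul, inv_mul_eq_div]
  abel

lemma fueterL_ciFunction (hp : p.im ≠ 0) (hu : HasFDerivAt ut a (reNormIm p))
    (hv : HasFDerivAt vt b (reNormIm p)) :
    fueterL (ciFunction ut vt) p =
      ((a 1 - b Complex.I : ℝ) : ℍ[ℝ]) + ((b 1 + a Complex.I : ℝ) : ℍ[ℝ]) * iota p
        + ((-2 * vt (reNormIm p) / ‖p.im‖ : ℝ) : ℍ[ℝ]) := by
  rw [fueterL_eq_fueterSum, funext (fderiv_ciFunction_apply hp hu hv), fueterSum_add,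
    fueterSum_add, fueterSum_mul_const, fueterSum_smul, fueterSum_ofReal_comp_mk (re_iota p),
    fueterSum_ofReal_comp_mk (re_iota p), fueterSum_projection (re_iota p) (norm_iota hp),
    add_mul, mul_assoc, Quaternion.mul_self_eq_neg_one (re_iota p) (norm_iota hp),
    Quaternion.smul_coe,
    show vt (reNormIm p) / ‖p.im‖ * -2 = -2 * vt (reNormIm p) / ‖p.im‖ by ring, add_left_inj]
  ext <;> simp [Quaternion.re_mul, Quaternion.imI_mul, Quaternion.imJ_mul, Quaternion.imK_mul,
    re_iota] <;> ring

end CIFunction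

-- twice `∂F/∂z̄`: there is no factor `1/2`
def dbar (F : ℂ → ℂ) (z : ℂ) : ℂ :=
  fderiv ℝ F z 1 + Complex.I * fderiv ℝ F z Complex.I

lemma dbar_ofReal_add_ofReal_mul_I {ut vt : ℂ → ℝ} {a b : ℂ →L[ℝ] ℝ} {z : ℂ}
    (hu : HasFDerivAt ut a z) (hv : HasFDerivAt vt b z) :
    dbar (fun w => (ut w : ℂ) + (vt w : ℂ) * Complex.I) z
      = ⟨a 1 - b Complex.I, b 1 + a Complex.I⟩ := by
  have h := (hu.smul_const (1 : ℂ)).add (hv.smul_const Complex.I)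
  simp only [Complex.real_smul, mul_one] at h
  have h' : HasFDerivAt (fun w => (ut w : ℂ) + (vt w : ℂ) * Complex.I) _ z := h
  rw [dbar, h'.fderiv]
  apply Complex.ext <;> simp [add_comm, sub_eq_add_neg]

lemma fueterL_ciFunction_eq_iff {p : ℍ[ℝ]} {ut vt : ℂ → ℝ} {a b : ℂ →L[ℝ] ℝ}
    (hp : p.im ≠ 0) (hu : HasFDerivAt ut a (reNormIm p)) (hv : HasFDerivAt vt b (reNormIm p)) :
    fueterL (ciFunction ut vt) p = ((-2 * vt (reNormIm p) / ‖p.im‖ : ℝ) : ℍ[ℝ]) ↔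
      dbar (fun w => (ut w : ℂ) + (vt w : ℂ) * Complex.I) (reNormIm p) = 0 := by
  rw [fueterL_ciFunction hp hu hv, add_eq_right, coe_add_coe_mul_iota_eq_zero_iff hp,
    dbar_ofReal_add_ofReal_mul_I hu hv, Complex.ext_iff]
  simp

/-- the complex component is holomorphic iff the associated CI
quaternionic function satisfies `∂f/∂_l p̄ = -2ṽ/r`. -/
theorem stmt15 (Ω : Set ℂ) (hΩ : IsOpen Ω) (hup : ∀ z ∈ Ω, 0 < z.im)
    (ut vt : ℂ → ℝ) (hut : ContDiffOn ℝ 1 ut Ω) (hvt : ContDiffOn ℝ 1 vt Ω) :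
    (∀ z ∈ Ω,
        fderiv ℝ (fun w : ℂ => (ut w : ℂ) + (vt w : ℂ) * Complex.I) z 1
          + Complex.I *
            fderiv ℝ (fun w : ℂ => (ut w : ℂ) + (vt w : ℂ) * Complex.I) z Complex.I
        = 0) ↔
    (∀ p ∈ {p : ℍ[ℝ] | p.im ≠ 0 ∧ (⟨p.re, ‖p.im‖⟩ : ℂ) ∈ Ω},
        fueterL (fun q : ℍ[ℝ] =>
          ((ut ⟨q.re, ‖q.im‖⟩ : ℝ) : ℍ[ℝ])
            + ((vt ⟨q.re, ‖q.im‖⟩ : ℝ) : ℍ[ℝ]) * iota q) p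
        = ((-2 * vt ⟨p.re, ‖p.im‖⟩ / ‖p.im‖ : ℝ) : ℍ[ℝ])) := by
  have hasFDerivAt_of_mem {g : ℂ → ℝ} (hg : ContDiffOn ℝ 1 g Ω) {z : ℂ} (hz : z ∈ Ω) :
      HasFDerivAt g (fderiv ℝ g z) z :=
    ((hg.differentiableOn one_ne_zero).differentiableAt (hΩ.mem_nhds hz)).hasFDerivAt
  have key (p : ℍ[ℝ]) (hp : p.im ≠ 0) (hz : reNormIm p ∈ Ω) :=
    fueterL_ciFunction_eq_iff hp (hasFDerivAt_of_mem hut hz) (hasFDerivAt_of_mem hvt hz)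
  constructor
  · rintro h p ⟨hp, hz⟩
    exact (key p hp hz).2 (h _ hz)
  · intro h z hz
    obtain ⟨p, hp, rfl⟩ := exists_reNormIm_eq (hup z hz)
    exact (key p hp hz).1 (h p ⟨hp, hz⟩)

end
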